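/- For any ε > 0, if x̄ ∈ F ∩ Z ∩ X is a Clarke stationary point of the penalized problem min{P(x; ε) : x ∈ X ∩ Z}, then x̄ is a KKT stationary point of the original constrained problem: there exists λ ∈ R^m with λ >= 0, λ^T g(x̄) = 0 (taking λ_i = β_i/ε for active indices from the convex-combination representation of ∂_c P), such that max{ξ^T s : ξ ∈ ∂_c f(x̄) + Σ_i λ_i ∂_c g_i(x̄)} >= 0 for every s ∈ D^c(x̄), and f(x̄) <= f(x) for all x ∈ B^z(x̄) ∩ F. -/

import Mathlib

open Filter

/-- The box `X = {x : l ≤ x ≤ u}`. -/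
def box (n : ℕ) (l u : Fin n → ℝ) : Set (Fin n → ℝ) :=
  {x | ∀ i, l i ≤ x i ∧ x i ≤ u i}

/-- The mixed-integer lattice `Z = {x : x_i ∈ ℤ for i ∈ Iz}`. -/
def latt (n : ℕ) (Iz : Finset (Fin n)) : Set (Fin n → ℝ) :=
  {x | ∀ i ∈ Iz, ∃ a : ℤ, x i = a}

/-- The cone `D^c(x)` of feasible continuous directions at `x` w.r.t. the box. -/
def Dc (n : ℕ) (Iz : Finset (Fin n)) (l u x : Fin n → ℝ) : Set (Fin n → ℝ) :=
  {s | (∀ i ∈ Iz, s i = 0) ∧ (∀ i, i ∉ Iz → x i = l i → 0 ≤ s i) ∧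
       (∀ i, i ∉ Iz → x i = u i → s i ≤ 0)}

/-- The set `D^z(x)` of feasible primitive discrete directions at `x`. -/
def Dz (n : ℕ) (Iz : Finset (Fin n)) (l u x : Fin n → ℝ) : Set (Fin n → ℤ) :=
  {d | Finset.gcd Iz (fun i => (d i).natAbs) = 1 ∧ (∀ i, i ∉ Iz → d i = 0) ∧
       (fun i => x i + (d i : ℝ)) ∈ box n l u ∩ latt n Iz}

/-- The discrete neighborhood `B^z(x)`. -/
def Bz (n : ℕ) (Iz : Finset (Fin n)) (l u x : Fin n → ℝ) : Set (Fin n → ℝ) :=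
  {y | ∃ d ∈ Dz n Iz l u x, y = fun i => x i + (d i : ℝ)}

/-- Clarke generalized directional derivative of `f` at `x` along `s`, with respect to the
continuous variables (the limsup is over `y_c → x_c`, `y_z = x_z`, `t ↓ 0`). -/
noncomputable def clarkeDeriv (n : ℕ) (Iz : Finset (Fin n)) (f : (Fin n → ℝ) → ℝ)
    (x s : Fin n → ℝ) : ℝ :=
  Filter.limsup (fun p : (Fin n → ℝ) × ℝ => (f (p.1 + p.2 • s) - f p.1) / p.2)
    ((nhds x ⊓ Filter.principal {y | ∀ i ∈ Iz, y i = x i}) ×ˢ nhdsWithin 0 (Set.Ioi 0))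

/-- Clarke–Jahn generalized directional derivative of `f` at `x` along `s`: the limsup is
additionally restricted to points `y ∈ S` and `y + t s ∈ S` (with `S = X ∩ Z`). -/
noncomputable def clarkeJahnDeriv (n : ℕ) (Iz : Finset (Fin n)) (S : Set (Fin n → ℝ))
    (f : (Fin n → ℝ) → ℝ) (x s : Fin n → ℝ) : ℝ :=
  Filter.limsup (fun p : (Fin n → ℝ) × ℝ => (f (p.1 + p.2 • s) - f p.1) / p.2)
    (((nhds x ⊓ Filter.principal {y | (∀ i ∈ Iz, y i = x i) ∧ y ∈ S}) ×ˢ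
        nhdsWithin 0 (Set.Ioi 0)) ⊓
      Filter.principal {p : (Fin n → ℝ) × ℝ | p.1 + p.2 • s ∈ S})

/-- Clarke generalized gradient of `f` at `x` with respect to the continuous variables. -/
noncomputable def clarkeGrad (n : ℕ) (Iz : Finset (Fin n)) (f : (Fin n → ℝ) → ℝ)
    (x : Fin n → ℝ) : Set (Fin n → ℝ) :=
  {v | (∀ i ∈ Iz, v i = 0) ∧
       ∀ s : Fin n → ℝ, (∀ i ∈ Iz, s i = 0) →
         (∑ j, s j * v j) ≤ clarkeDeriv n Iz f x s}

/-!
Write `D h(s)` for the Clarke derivative at `x̄` along a continuous direction `s`. The Clarke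
calculus gives `D P(s) ≤ D f(s) + (1/ε) Σ_{g_i(x̄) = 0} max(0, D g_i(s))`: inactive constraints
drop out because `max(0, g_i)` vanishes near `x̄`. By Hahn–Banach, `D h` is the support function
of the compact convex set `∂h(x̄)`, so the right-hand side is the support function of
`K = ∂f(x̄) + Σ_{g_i(x̄) = 0} [0, 1/ε] ∂g_i(x̄)`. Stationarity of `P` therefore provides, for
each `s ∈ D^c(x̄)`, an element of `K` with nonnegative product with `s`. Since `K` is compact
convex and the polyhedral cone `D^c(x̄)` equals its bidual, separation yields a single `ξ ∈ K`
that is nonnegative on all of `D^c(x̄)`; its coefficients in `[0, 1/ε]` are the multipliers.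
On feasible points the penalty vanishes, so the discrete condition carries over unchanged.
-/

open Set Matrix
open scoped Topology Pointwise

theorem limsup_const_mul_of_nonneg {α : Type*} {F : Filter α} [F.NeBot] {u : α → ℝ} {c : ℝ}
    (hc : 0 ≤ c) (hu : F.IsBoundedUnder (· ≤ ·) u) (hu' : F.IsCoboundedUnder (· ≤ ·) u) :
    limsup (fun a => c * u a) F = c * limsup u F :=
  ((monotone_mul_left_of_nonneg hc).map_limsup_of_continuousAt u
    (continuous_const_mul c).continuousAt hu hu').symm

theorem exists_linearMap_le_sublinear_eq {E : Type*} [AddCommGroup E] [Module ℝ E] (N : E → ℝ)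
    (N_hom : ∀ c : ℝ, 0 < c → ∀ x, N (c • x) = c * N x) (N_add : ∀ x y, N (x + y) ≤ N x + N y)
    (x : E) : ∃ φ : E →ₗ[ℝ] ℝ, φ x = N x ∧ ∀ y, φ y ≤ N y := by
  have N_zero : N 0 = 0 := by
    have := N_hom 2 two_pos 0
    rw [smul_zero] at this
    linarith
  have hx : ∀ c : ℝ, c • x = 0 → (RingHom.id ℝ) c • N x = 0 := fun c hc => by
    rcases smul_eq_zero.1 hc with rfl | rfl <;> simp [N_zero]
  set φ₀ := LinearPMap.mkSpanSingleton' x (N x) hx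
  have hφ₀ : ∀ y : φ₀.domain, φ₀ y ≤ N y := by
    rintro ⟨y, hy⟩
    obtain ⟨c, rfl⟩ := Submodule.mem_span_singleton.1 hy
    rw [LinearPMap.mkSpanSingleton'_apply, RingHom.id_apply, smul_eq_mul]
    rcases lt_trichotomy c 0 with hc | rfl | hc
    · -- `0 = N (c • x + (-c) • x) ≤ N (c • x) + (-c) * N x`
      have := N_add (c • x) ((-c) • x)
      rw [← add_smul, add_neg_cancel, zero_smul, N_zero, N_hom _ (neg_pos.2 hc)] at this
      linarith
    · simp [N_zero]
    · exact (N_hom c hc x).ge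
  obtain ⟨φ, hφx, hφ⟩ := exists_extension_of_le_sublinear φ₀ N N_hom N_add hφ₀
  have hmem : x ∈ φ₀.domain := by
    rw [LinearPMap.domain_mkSpanSingleton]
    exact Submodule.mem_span_singleton_self x
  exact ⟨φ, by rw [hφx ⟨x, hmem⟩, LinearPMap.mkSpanSingleton'_apply_self], hφ⟩

theorem exists_dotProduct_eq {ι : Type*} [Fintype ι] [DecidableEq ι] (φ : (ι → ℝ) →ₗ[ℝ] ℝ) :
    ∃ v : ι → ℝ, ∀ s, φ s = v ⬝ᵥ s :=
  ⟨(dotProductEquiv ℝ ι).symm φ, fun s =>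
    (LinearMap.congr_fun ((dotProductEquiv ℝ ι).apply_symm_apply φ) s).symm⟩

def dotDual {ι : Type*} [Fintype ι] (C : Set (ι → ℝ)) : Set (ι → ℝ) :=
  {v | ∀ s ∈ C, 0 ≤ v ⬝ᵥ s}

theorem exists_mem_dotDual_of_forall_exists {ι : Type*} [Fintype ι] [DecidableEq ι]
    {K C : Set (ι → ℝ)} (hKconv : Convex ℝ K) (hKcomp : IsCompact K)
    (hC : dotDual (dotDual C) ⊆ C) (hK : ∀ s ∈ C, ∃ ξ ∈ K, 0 ≤ ξ ⬝ᵥ s) :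
    ∃ ξ ∈ K, ξ ∈ dotDual C := by
  by_contra! hdisj
  have hconv : Convex ℝ (dotDual C) := fun v hv w hw a b ha hb _ s hs => by
    rw [add_dotProduct, smul_dotProduct, smul_dotProduct, smul_eq_mul, smul_eq_mul]
    exact add_nonneg (mul_nonneg ha (hv s hs)) (mul_nonneg hb (hw s hs))
  have hclosed : IsClosed (dotDual C) := by
    simp only [dotDual, Set.ofPred_forall]
    exact isClosed_biInter fun s _ =>
      isClosed_le continuous_const (continuous_id.dotProduct continuous_const)
  obtain ⟨φ, u, v, hφK, huv, hφC⟩ := geometric_hahn_banach_compact_closed hKconv hKcomp hconv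
    hclosed (Set.disjoint_left.2 hdisj)
  obtain ⟨c, hc⟩ := exists_dotProduct_eq φ.toLinearMap
  have hc' : ∀ s, φ s = c ⬝ᵥ s := hc
  have hv : v < 0 := by simpa using hφC 0 fun s _ => by simp
  -- `φ ≥ 0` on the cone `dotDual C`: a negative value could be scaled down to `v`
  have hcC : c ∈ C := hC fun b hb => by
    by_contra! hcb
    have hmem : (v / (c ⬝ᵥ b)) • b ∈ dotDual C := fun s hs => by
      rw [smul_dotProduct, smul_eq_mul]
      exact mul_nonneg (div_nonneg_of_nonpos hv.le hcb.le) (hb s hs)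
    have := hφC _ hmem
    rw [hc', dotProduct_smul, smul_eq_mul, div_mul_cancel₀ _ hcb.ne] at this
    exact lt_irrefl _ this
  obtain ⟨ξ, hξK, hξc⟩ := hK c hcC
  have := hφK ξ hξK
  rw [hc', dotProduct_comm] at this
  linarith

theorem Convex.Icc_zero_smul {E : Type*} [AddCommGroup E] [Module ℝ E] {K : Set E}
    (hK : Convex ℝ K) (c : ℝ) : Convex ℝ (Icc 0 c • K) := by
  rintro _ ⟨t₁, ht₁, w₁, hw₁, rfl⟩ _ ⟨t₂, ht₂, w₂, hw₂, rfl⟩ a b ha hb hab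
  have h₁ := mul_nonneg ha ht₁.1
  have h₂ := mul_nonneg hb ht₂.1
  rcases (add_nonneg h₁ h₂).eq_or_lt with hβ | hβ
  · refine ⟨0, left_mem_Icc.2 (ht₁.1.trans ht₁.2), w₁, hw₁, ?_⟩
    have ha₁ : a * t₁ = 0 := by linarith
    have hb₂ : b * t₂ = 0 := by linarith
    simp [smul_smul, ha₁, hb₂]
  · -- rescale the combination of `w₁` and `w₂` to a convex one
    refine ⟨a * t₁ + b * t₂, ⟨hβ.le, ?_⟩, (a * t₁ / (a * t₁ + b * t₂)) • w₁ +
      (b * t₂ / (a * t₁ + b * t₂)) • w₂, hK hw₁ hw₂ (by positivity) (by positivity) ?_, ?_⟩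
    · nlinarith [ht₁.2, ht₂.2]
    · field_simp
    · simp only [smul_add, smul_smul, mul_div_cancel₀ _ hβ.ne']

section ClarkeDerivative

variable {n : ℕ} {Iz : Finset (Fin n)} {x s : Fin n → ℝ} {h : (Fin n → ℝ) → ℝ} {L : ℝ}

def LipschitzInCont (Iz : Finset (Fin n)) (L : ℝ) (h : (Fin n → ℝ) → ℝ) : Prop :=
  ∀ x y : Fin n → ℝ, (∀ i ∈ Iz, x i = y i) → |h x - h y| ≤ L * Real.sqrt (∑ i, (x i - y i) ^ 2)

def clarkeFilter (Iz : Finset (Fin n)) (x : Fin n → ℝ) : Filter ((Fin n → ℝ) × ℝ) :=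
  (𝓝 x ⊓ 𝓟 {y | ∀ i ∈ Iz, y i = x i}) ×ˢ 𝓝[>] 0

noncomputable def diffQuot (h : (Fin n → ℝ) → ℝ) (s : Fin n → ℝ) (p : (Fin n → ℝ) × ℝ) : ℝ :=
  (h (p.1 + p.2 • s) - h p.1) / p.2

theorem clarkeDeriv_eq_limsup :
    clarkeDeriv n Iz h x s = limsup (diffQuot h s) (clarkeFilter Iz x) := rfl

instance clarkeFilter_neBot : (clarkeFilter Iz x).NeBot := by
  refine Filter.prod_neBot.2 ⟨?_, nhdsGT_neBot 0⟩
  rw [← nhdsWithin]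
  exact mem_closure_iff_nhdsWithin_neBot.1 (subset_closure fun _ _ => rfl)

theorem eventually_snd_pos_clarkeFilter : ∀ᶠ p in clarkeFilter Iz x, 0 < p.2 :=
  Eventually.prod_inr self_mem_nhdsWithin _

theorem tendsto_fst_clarkeFilter :
    Tendsto Prod.fst (clarkeFilter Iz x) (𝓝 x ⊓ 𝓟 {y | ∀ i ∈ Iz, y i = x i}) :=
  tendsto_fst

theorem tendsto_add_smul_clarkeFilter (hs : ∀ i ∈ Iz, s i = 0) :
    Tendsto (fun p : (Fin n → ℝ) × ℝ => (p.1 + p.2 • s, p.2))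
      (clarkeFilter Iz x) (clarkeFilter Iz x) := by
  refine (tendsto_inf.2 ⟨?_, tendsto_principal.2 ?_⟩).prodMk tendsto_snd
  · have h1 : Tendsto (fun p : (Fin n → ℝ) × ℝ => p.1) (clarkeFilter Iz x) (𝓝 x) :=
      tendsto_fst.mono_right inf_le_left
    have h2 : Tendsto (fun p : (Fin n → ℝ) × ℝ => p.2) (clarkeFilter Iz x) (𝓝 0) :=
      tendsto_snd.mono_right nhdsWithin_le_nhds
    simpa using h1.add (h2.smul_const s)
  · filter_upwards [tendsto_fst_clarkeFilter.eventually
      (mem_inf_of_right (mem_principal_self _))] with p hp i hi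
    simp [hp i hi, hs i hi]

theorem tendsto_mul_snd_clarkeFilter {c : ℝ} (hc : 0 < c) :
    Tendsto (fun p : (Fin n → ℝ) × ℝ => (p.1, c * p.2))
      (clarkeFilter Iz x) (clarkeFilter Iz x) := by
  refine tendsto_fst.prodMk (tendsto_nhdsWithin_iff.2 ⟨?_, ?_⟩)
  · have h2 : Tendsto (fun p : (Fin n → ℝ) × ℝ => p.2) (clarkeFilter Iz x) (𝓝 0) :=
      tendsto_snd.mono_right nhdsWithin_le_nhds
    simpa [clarkeFilter] using h2.const_mul c
  · filter_upwards [eventually_snd_pos_clarkeFilter] with p hp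
    exact mul_pos hc hp

theorem sqrt_sum_sq_add_smul_sub (y s : Fin n → ℝ) {t : ℝ} (ht : 0 ≤ t) :
    Real.sqrt (∑ i, ((y + t • s) i - y i) ^ 2) = t * Real.sqrt (∑ i, s i ^ 2) := by
  simp_rw [Pi.add_apply, Pi.smul_apply, smul_eq_mul, add_sub_cancel_left, mul_pow,
    ← Finset.mul_sum]
  rw [Real.sqrt_mul (sq_nonneg t), Real.sqrt_sq ht]

theorem LipschitzInCont.abs_sub_le (hh : LipschitzInCont Iz L h) (hs : ∀ i ∈ Iz, s i = 0)
    (y : Fin n → ℝ) {t : ℝ} (ht : 0 ≤ t) :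
    |h (y + t • s) - h y| ≤ L * (t * Real.sqrt (∑ i, s i ^ 2)) := by
  rw [← sqrt_sum_sq_add_smul_sub y s ht]
  exact hh _ _ fun i hi => by simp [hs i hi]

theorem LipschitzInCont.eventually_abs_diffQuot_le (hh : LipschitzInCont Iz L h)
    (hs : ∀ i ∈ Iz, s i = 0) :
    ∀ᶠ p in clarkeFilter Iz x, |diffQuot h s p| ≤ L * Real.sqrt (∑ i, s i ^ 2) := by
  filter_upwards [eventually_snd_pos_clarkeFilter] with p hp
  rw [diffQuot, abs_div, abs_of_pos hp, div_le_iff₀ hp]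
  linarith [hh.abs_sub_le hs p.1 hp.le]

theorem LipschitzInCont.isBoundedUnder_diffQuot_comp {α : Type*} {F : Filter α}
    {m : α → (Fin n → ℝ) × ℝ} (hh : LipschitzInCont Iz L h) (hs : ∀ i ∈ Iz, s i = 0)
    (hm : Tendsto m F (clarkeFilter Iz x)) :
    F.IsBoundedUnder (· ≤ ·) (diffQuot h s ∘ m) ∧ F.IsBoundedUnder (· ≥ ·) (diffQuot h s ∘ m) :=
  isBoundedUnder_le_abs.1 <|
    isBoundedUnder_of_eventually_le (hm.eventually (hh.eventually_abs_diffQuot_le hs))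

theorem LipschitzInCont.isBoundedUnder_diffQuot (hh : LipschitzInCont Iz L h)
    (hs : ∀ i ∈ Iz, s i = 0) :
    (clarkeFilter Iz x).IsBoundedUnder (· ≤ ·) (diffQuot h s) ∧
      (clarkeFilter Iz x).IsBoundedUnder (· ≥ ·) (diffQuot h s) :=
  hh.isBoundedUnder_diffQuot_comp hs tendsto_id

theorem LipschitzInCont.clarkeDeriv_le_of_eventually_le (hh : LipschitzInCont Iz L h)
    (hs : ∀ i ∈ Iz, s i = 0) {a : ℝ} (ha : ∀ᶠ p in clarkeFilter Iz x, diffQuot h s p ≤ a) :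
    clarkeDeriv n Iz h x s ≤ a :=
  limsup_le_of_le (hh.isBoundedUnder_diffQuot hs).2.isCoboundedUnder_le ha

theorem LipschitzInCont.clarkeDeriv_le (hh : LipschitzInCont Iz L h) (hs : ∀ i ∈ Iz, s i = 0) :
    clarkeDeriv n Iz h x s ≤ L * Real.sqrt (∑ i, s i ^ 2) :=
  hh.clarkeDeriv_le_of_eventually_le hs <|
    (hh.eventually_abs_diffQuot_le hs).mono fun _ hp => (abs_le.1 hp).2

theorem clarkeDeriv_zero : clarkeDeriv n Iz h x 0 = 0 := by
  have : diffQuot h 0 = fun _ => 0 := by ext p; simp [diffQuot]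
  rw [clarkeDeriv_eq_limsup, this, limsup_const]

end ClarkeDerivative

section ClarkeCalculus

variable {n : ℕ} {Iz : Finset (Fin n)} {x s t : Fin n → ℝ} {h g : (Fin n → ℝ) → ℝ} {L : ℝ}

theorem LipschitzInCont.clarkeDeriv_add_le (hh : LipschitzInCont Iz L h)
    (hs : ∀ i ∈ Iz, s i = 0) (ht : ∀ i ∈ Iz, t i = 0) :
    clarkeDeriv n Iz h x (s + t) ≤ clarkeDeriv n Iz h x s + clarkeDeriv n Iz h x t := by
  set m : (Fin n → ℝ) × ℝ → (Fin n → ℝ) × ℝ := fun p => (p.1 + p.2 • t, p.2)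
  have hm : Tendsto m (clarkeFilter Iz x) (clarkeFilter Iz x) := tendsto_add_smul_clarkeFilter ht
  have hsplit : diffQuot h (s + t) = diffQuot h t + diffQuot h s ∘ m := by
    ext p
    simp only [diffQuot, m, Pi.add_apply, Function.comp_apply, smul_add, add_right_comm p.1,
      ← add_assoc]
    ring
  have hbs := hh.isBoundedUnder_diffQuot_comp hs hm
  have hbt := hh.isBoundedUnder_diffQuot (x := x) ht
  rw [clarkeDeriv_eq_limsup, hsplit, add_comm (clarkeDeriv n Iz h x s)]
  exact (limsup_add_le hbt.2 hbt.1 hbs.2.isCoboundedUnder_le hbs.1).trans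
    (add_le_add_right (hm.limsup_comp_le_limsup hbs.2.isCoboundedUnder_le
      (hh.isBoundedUnder_diffQuot hs).1) _)

theorem LipschitzInCont.clarkeDeriv_smul_le (hh : LipschitzInCont Iz L h)
    (hs : ∀ i ∈ Iz, s i = 0) {c : ℝ} (hc : 0 < c) :
    clarkeDeriv n Iz h x (c • s) ≤ c * clarkeDeriv n Iz h x s := by
  set m : (Fin n → ℝ) × ℝ → (Fin n → ℝ) × ℝ := fun p => (p.1, c * p.2)
  have hm : Tendsto m (clarkeFilter Iz x) (clarkeFilter Iz x) := tendsto_mul_snd_clarkeFilter hc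
  have hscale : diffQuot h (c • s) = fun p => c * (diffQuot h s ∘ m) p := by
    ext p
    rcases eq_or_ne p.2 0 with hp | hp
    · simp [diffQuot, m, hp]
    · simp only [diffQuot, m, Function.comp_apply, smul_smul, mul_comm p.2 c]
      field_simp
  have hb := hh.isBoundedUnder_diffQuot_comp hs hm
  rw [clarkeDeriv_eq_limsup, hscale, limsup_const_mul_of_nonneg hc.le hb.1 hb.2.isCoboundedUnder_le]
  exact mul_le_mul_of_nonneg_left (hm.limsup_comp_le_limsup hb.2.isCoboundedUnder_le
    (hh.isBoundedUnder_diffQuot hs).1) hc.le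

theorem LipschitzInCont.clarkeDeriv_smul (hh : LipschitzInCont Iz L h)
    (hs : ∀ i ∈ Iz, s i = 0) {c : ℝ} (hc : 0 < c) :
    clarkeDeriv n Iz h x (c • s) = c * clarkeDeriv n Iz h x s := by
  refine (hh.clarkeDeriv_smul_le hs hc).antisymm ?_
  have hcs : ∀ i ∈ Iz, (c • s) i = 0 := fun i hi => by simp [hs i hi]
  have := hh.clarkeDeriv_smul_le (x := x) hcs (inv_pos.2 hc)
  rw [smul_smul, inv_mul_cancel₀ hc.ne', one_smul] at this
  rwa [← le_div_iff₀' hc, div_eq_inv_mul]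

theorem LipschitzInCont.sum {ι : Type*} (t : Finset ι) {h : ι → (Fin n → ℝ) → ℝ} {L : ι → ℝ}
    (hh : ∀ i ∈ t, LipschitzInCont Iz (L i) (h i)) :
    LipschitzInCont Iz (∑ i ∈ t, L i) fun y => ∑ i ∈ t, h i y := fun y z hyz =>
  calc |∑ i ∈ t, h i y - ∑ i ∈ t, h i z| ≤ ∑ i ∈ t, |h i y - h i z| := by
        rw [← Finset.sum_sub_distrib]; exact Finset.abs_sum_le_sum_abs _ _
    _ ≤ _ := by rw [Finset.sum_mul]; exact Finset.sum_le_sum fun i hi => hh i hi y z hyz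

theorem LipschitzInCont.const_mul (hh : LipschitzInCont Iz L h) {c : ℝ} (hc : 0 ≤ c) :
    LipschitzInCont Iz (c * L) fun y => c * h y := fun y z hyz => by
  rw [← mul_sub, abs_mul, abs_of_nonneg hc, mul_assoc]
  exact mul_le_mul_of_nonneg_left (hh y z hyz) hc

theorem LipschitzInCont.max_zero (hh : LipschitzInCont Iz L h) :
    LipschitzInCont Iz L fun y => max 0 (h y) := fun y z hyz => by
  show |max 0 (h y) - max 0 (h z)| ≤ _
  rw [max_comm 0 (h y), max_comm 0 (h z)]
  exact (abs_max_sub_max_le_abs _ _ _).trans (hh y z hyz)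

theorem LipschitzInCont.clarkeDeriv_fun_add_le {h₁ h₂ : (Fin n → ℝ) → ℝ} {L₁ L₂ : ℝ}
    (hh₁ : LipschitzInCont Iz L₁ h₁) (hh₂ : LipschitzInCont Iz L₂ h₂) (hs : ∀ i ∈ Iz, s i = 0) :
    clarkeDeriv n Iz (fun y => h₁ y + h₂ y) x s ≤
      clarkeDeriv n Iz h₁ x s + clarkeDeriv n Iz h₂ x s := by
  have hb₁ := hh₁.isBoundedUnder_diffQuot (x := x) hs
  have hb₂ := hh₂.isBoundedUnder_diffQuot (x := x) hs
  have hsplit : diffQuot (fun y => h₁ y + h₂ y) s = diffQuot h₁ s + diffQuot h₂ s := by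
    ext p; simp only [diffQuot, Pi.add_apply]; ring
  rw [clarkeDeriv_eq_limsup, hsplit]
  exact limsup_add_le hb₁.2 hb₁.1 hb₂.2.isCoboundedUnder_le hb₂.1

theorem clarkeDeriv_sum_le {ι : Type*} (t : Finset ι) {h : ι → (Fin n → ℝ) → ℝ} {L : ι → ℝ}
    (hh : ∀ i ∈ t, LipschitzInCont Iz (L i) (h i)) (hs : ∀ i ∈ Iz, s i = 0) :
    clarkeDeriv n Iz (fun y => ∑ i ∈ t, h i y) x s ≤ ∑ i ∈ t, clarkeDeriv n Iz (h i) x s := by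
  classical
  induction t using Finset.induction_on with
  | empty =>
    have hzero : diffQuot (fun _ => (0 : ℝ)) s = fun _ => 0 := by ext; simp [diffQuot]
    simp [clarkeDeriv_eq_limsup, hzero]
  | insert a t ha ih =>
    simp only [Finset.sum_insert ha]
    have hht := fun i hi => hh i (Finset.mem_insert_of_mem hi)
    exact ((hh a (Finset.mem_insert_self a t)).clarkeDeriv_fun_add_le
      (LipschitzInCont.sum t hht) hs).trans (add_le_add le_rfl (ih hht))

theorem LipschitzInCont.clarkeDeriv_const_mul (hh : LipschitzInCont Iz L h)
    (hs : ∀ i ∈ Iz, s i = 0) {c : ℝ} (hc : 0 ≤ c) :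
    clarkeDeriv n Iz (fun y => c * h y) x s = c * clarkeDeriv n Iz h x s := by
  have hb := hh.isBoundedUnder_diffQuot (x := x) hs
  have hscale : diffQuot (fun y => c * h y) s = fun p => c * diffQuot h s p := by
    ext p; simp only [diffQuot]; ring
  rw [clarkeDeriv_eq_limsup, hscale, limsup_const_mul_of_nonneg hc hb.1 hb.2.isCoboundedUnder_le]
  rfl

theorem LipschitzInCont.clarkeDeriv_max_zero_le (hg : LipschitzInCont Iz L g)
    (hs : ∀ i ∈ Iz, s i = 0) :
    clarkeDeriv n Iz (fun y => max 0 (g y)) x s ≤ max 0 (clarkeDeriv n Iz g x s) := by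
  have hb := hg.isBoundedUnder_diffQuot (x := x) hs
  have hmono : Monotone (max (0 : ℝ)) := fun _ _ hab => max_le_max le_rfl hab
  have hle : ∀ᶠ p in clarkeFilter Iz x,
      diffQuot (fun y => max 0 (g y)) s p ≤ (max 0 ∘ diffQuot g s) p := by
    filter_upwards [eventually_snd_pos_clarkeFilter] with p hp
    rw [Function.comp_apply, diffQuot, diffQuot, div_le_iff₀ hp, max_mul_of_nonneg _ _ hp.le,
      zero_mul, div_mul_cancel₀ _ hp.ne']
    rcases le_total 0 (g (p.1 + p.2 • s)) with h₁ | h₁ <;>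
      rcases le_total 0 (g p.1) with h₂ | h₂ <;> simp [h₁, h₂]
  rw [clarkeDeriv_eq_limsup, clarkeDeriv_eq_limsup, hmono.map_limsup_of_continuousAt _
    (continuous_const.max continuous_id).continuousAt hb.1 hb.2.isCoboundedUnder_le]
  exact limsup_le_limsup hle (hg.max_zero.isBoundedUnder_diffQuot hs).2.isCoboundedUnder_le
    (hb.1.comp fun _ _ hab => hmono hab)

theorem LipschitzInCont.tendsto (hh : LipschitzInCont Iz L h) :
    Tendsto h (𝓝 x ⊓ 𝓟 {y | ∀ i ∈ Iz, y i = x i}) (𝓝 (h x)) := by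
  have hbound : Tendsto (fun y => L * Real.sqrt (∑ i, (y i - x i) ^ 2)) (𝓝 x) (𝓝 0) := by
    have : Continuous fun y : Fin n → ℝ => L * Real.sqrt (∑ i, (y i - x i) ^ 2) := by fun_prop
    simpa using this.tendsto x
  refine tendsto_iff_dist_tendsto_zero.2 <|
    squeeze_zero' (.of_forall fun _ => dist_nonneg) ?_ (hbound.mono_left inf_le_left)
  filter_upwards [mem_inf_of_right (mem_principal_self _)] with y hy
  exact hh y x hy

theorem LipschitzInCont.clarkeDeriv_max_zero_of_neg (hg : LipschitzInCont Iz L g)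
    (hs : ∀ i ∈ Iz, s i = 0) (hgx : g x < 0) :
    clarkeDeriv n Iz (fun y => max 0 (g y)) x s ≤ 0 := by
  have hneg : ∀ᶠ y in 𝓝 x ⊓ 𝓟 {y | ∀ i ∈ Iz, y i = x i}, g y < 0 :=
    hg.tendsto.eventually (gt_mem_nhds hgx)
  refine hg.max_zero.clarkeDeriv_le_of_eventually_le hs ?_
  filter_upwards [tendsto_fst_clarkeFilter.eventually hneg,
    (tendsto_fst_clarkeFilter.comp (tendsto_add_smul_clarkeFilter hs)).eventually hneg]
    with p h₁ h₂
  have h₂' : g (p.1 + p.2 • s) < 0 := h₂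
  simp [diffQuot, max_eq_left h₁.le, max_eq_left h₂'.le]

theorem LipschitzInCont.clarkeDeriv_penalty_le {ι : Type*} [Fintype ι] {f : (Fin n → ℝ) → ℝ}
    {g : ι → (Fin n → ℝ) → ℝ} {Lf : ℝ} {Lg : ι → ℝ} (hf : LipschitzInCont Iz Lf f)
    (hg : ∀ i, LipschitzInCont Iz (Lg i) (g i)) {c : ℝ} (hc : 0 ≤ c) (hgx : ∀ i, g i x ≤ 0)
    (hs : ∀ i ∈ Iz, s i = 0) :
    clarkeDeriv n Iz (fun y => f y + c * ∑ i, max 0 (g i y)) x s ≤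
      clarkeDeriv n Iz f x s +
        ∑ i, (if g i x = 0 then c else 0) * max 0 (clarkeDeriv n Iz (g i) x s) := by
  have hmax : ∀ i, LipschitzInCont Iz (Lg i) fun y => max 0 (g i y) := fun i => (hg i).max_zero
  have hsum := LipschitzInCont.sum Finset.univ fun i _ => hmax i
  calc _ ≤ clarkeDeriv n Iz f x s + clarkeDeriv n Iz (fun y => c * ∑ i, max 0 (g i y)) x s :=
        hf.clarkeDeriv_fun_add_le (hsum.const_mul hc) hs
    _ = clarkeDeriv n Iz f x s + c * clarkeDeriv n Iz (fun y => ∑ i, max 0 (g i y)) x s := by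
        rw [hsum.clarkeDeriv_const_mul hs hc]
    _ ≤ clarkeDeriv n Iz f x s + ∑ i, c * clarkeDeriv n Iz (fun y => max 0 (g i y)) x s := by
        rw [← Finset.mul_sum]
        gcongr
        exact clarkeDeriv_sum_le _ (fun i _ => hmax i) hs
    _ ≤ _ := by
        refine add_le_add le_rfl (Finset.sum_le_sum fun i _ => ?_)
        split_ifs with hi
        · exact mul_le_mul_of_nonneg_left ((hg i).clarkeDeriv_max_zero_le hs) hc
        · rw [zero_mul]
          exact mul_nonpos_of_nonneg_of_nonpos hc
            ((hg i).clarkeDeriv_max_zero_of_neg hs ((hgx i).lt_of_ne hi))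

end ClarkeCalculus

section ClarkeGradient

variable {n : ℕ} {Iz : Finset (Fin n)} {x s v : Fin n → ℝ} {h : (Fin n → ℝ) → ℝ} {L : ℝ}

def contProj (Iz : Finset (Fin n)) : (Fin n → ℝ) →ₗ[ℝ] (Fin n → ℝ) where
  toFun s j := if j ∈ Iz then 0 else s j
  map_add' s t := by ext j; split_ifs <;> simp [*]
  map_smul' c s := by ext j; split_ifs <;> simp [*]

theorem contProj_of_forall_eq_zero (hs : ∀ i ∈ Iz, s i = 0) : contProj Iz s = s := by
  ext j
  show (if j ∈ Iz then 0 else s j) = s j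
  split_ifs with hj
  · exact (hs j hj).symm
  · rfl

theorem contProj_single_of_mem {i : Fin n} (hi : i ∈ Iz) (a : ℝ) :
    contProj Iz (Pi.single i a : Fin n → ℝ) = 0 := by
  ext j
  show (if j ∈ Iz then 0 else (Pi.single i a : Fin n → ℝ) j) = 0
  split_ifs with hj
  · rfl
  · exact Pi.single_eq_of_ne (M := fun _ => ℝ) (fun hji : j = i => hj (hji ▸ hi)) a

theorem dotProduct_le_clarkeDeriv (hv : v ∈ clarkeGrad n Iz h x) (hs : ∀ i ∈ Iz, s i = 0) :
    v ⬝ᵥ s ≤ clarkeDeriv n Iz h x s := by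
  rw [dotProduct_comm]
  exact hv.2 s hs

theorem LipschitzInCont.exists_mem_clarkeGrad_dotProduct_eq (hh : LipschitzInCont Iz L h)
    (hs : ∀ i ∈ Iz, s i = 0) :
    ∃ v ∈ clarkeGrad n Iz h x, v ⬝ᵥ s = clarkeDeriv n Iz h x s := by
  have hproj : ∀ t, ∀ i ∈ Iz, contProj Iz t i = 0 := fun _ _ hi => if_pos hi
  obtain ⟨φ, hφs, hφ⟩ := exists_linearMap_le_sublinear_eq
    (fun t => clarkeDeriv n Iz h x (contProj Iz t))
    (fun c hc t => by simp only [map_smul]; exact hh.clarkeDeriv_smul (hproj t) hc)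
    (fun t t' => by simp only [map_add]; exact hh.clarkeDeriv_add_le (hproj t) (hproj t')) s
  obtain ⟨v, hv⟩ := exists_dotProduct_eq φ
  have hle : ∀ t, (∀ i ∈ Iz, t i = 0) → v ⬝ᵥ t ≤ clarkeDeriv n Iz h x t := fun t ht => by
    simpa only [← hv, contProj_of_forall_eq_zero ht] using hφ t
  refine ⟨v, ⟨fun i hi => ?_, fun t ht => (dotProduct_comm t v).trans_le (hle t ht)⟩, ?_⟩
  · -- `±v i = φ (±eᵢ) ≤ D h (contProj (±eᵢ)) = D h 0 = 0`
    have h₁ := hφ (Pi.single i 1)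
    have h₂ := hφ (Pi.single i (-1))
    rw [hv, dotProduct_single, contProj_single_of_mem hi, clarkeDeriv_zero] at h₁ h₂
    linarith
  · rw [← hv, hφs, contProj_of_forall_eq_zero hs]

theorem convex_clarkeGrad : Convex ℝ (clarkeGrad n Iz h x) := by
  rintro v ⟨hv₀, hv⟩ w ⟨hw₀, hw⟩ a b ha hb hab
  refine ⟨fun i hi => by simp [hv₀ i hi, hw₀ i hi], fun s hs => ?_⟩
  have hv' := mul_le_mul_of_nonneg_left (hv s hs) ha
  have hw' := mul_le_mul_of_nonneg_left (hw s hs) hb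
  have hD : a * clarkeDeriv n Iz h x s + b * clarkeDeriv n Iz h x s = clarkeDeriv n Iz h x s := by
    rw [← add_mul, hab, one_mul]
  change s ⬝ᵥ (a • v + b • w) ≤ _
  rw [dotProduct_add, dotProduct_smul, dotProduct_smul, smul_eq_mul, smul_eq_mul]
  exact hD ▸ add_le_add hv' hw'

theorem isClosed_clarkeGrad : IsClosed (clarkeGrad n Iz h x) := by
  have : clarkeGrad n Iz h x = (⋂ i ∈ Iz, {v | v i = 0}) ∩
      ⋂ s ∈ {s : Fin n → ℝ | ∀ i ∈ Iz, s i = 0}, {v | s ⬝ᵥ v ≤ clarkeDeriv n Iz h x s} := by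
    ext v; simp [clarkeGrad, dotProduct]
  rw [this]
  exact (isClosed_biInter fun i _ => isClosed_eq (continuous_apply i) continuous_const).inter
    (isClosed_biInter fun s _ => isClosed_le (continuous_const.dotProduct continuous_id)
      continuous_const)

theorem LipschitzInCont.isCompact_clarkeGrad (hh : LipschitzInCont Iz L h) :
    IsCompact (clarkeGrad n Iz h x) := by
  refine (isCompact_univ_pi fun _ => isCompact_Icc (a := -|L|) (b := |L|)).of_isClosed_subset
    isClosed_clarkeGrad fun v hv => Set.mem_univ_pi.2 fun j => ?_
  by_cases hj : j ∈ Iz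
  · simp [hv.1 j hj]
  · have hD : ∀ a : ℝ, a * v j ≤ L * |a| := fun a => by
      have hs : ∀ i ∈ Iz, (Pi.single j a : Fin n → ℝ) i = 0 := fun i hi =>
        Pi.single_eq_of_ne (M := fun _ => ℝ) (fun hij : i = j => hj (hij ▸ hi)) a
      have := (dotProduct_le_clarkeDeriv hv hs).trans (hh.clarkeDeriv_le hs)
      simpa [dotProduct_single, mul_comm, Pi.single_apply, Real.sqrt_sq_eq_abs] using this
    have h₁ := hD 1
    have h₂ := hD (-1)
    simp only [one_mul, abs_one, mul_one, neg_mul, abs_neg] at h₁ h₂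
    exact ⟨by linarith [le_abs_self L], by linarith [le_abs_self L]⟩

theorem LipschitzInCont.isCompact_add_sum_smul_clarkeGrad {ι : Type*} [Fintype ι]
    {f : (Fin n → ℝ) → ℝ} {g : ι → (Fin n → ℝ) → ℝ} {Lf : ℝ} {Lg : ι → ℝ}
    (hf : LipschitzInCont Iz Lf f) (hg : ∀ i, LipschitzInCont Iz (Lg i) (g i)) (w : ι → ℝ) :
    IsCompact (clarkeGrad n Iz f x + ∑ i, Icc 0 (w i) • clarkeGrad n Iz (g i) x) :=
  hf.isCompact_clarkeGrad.add <|
    Finset.sum_induction _ IsCompact (fun _ _ => IsCompact.add) isCompact_singleton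
      fun i _ => isCompact_Icc.smul_set (hg i).isCompact_clarkeGrad

theorem exists_mem_add_sum_smul_clarkeGrad_le {ι : Type*} [Fintype ι] {f : (Fin n → ℝ) → ℝ}
    {g : ι → (Fin n → ℝ) → ℝ} {Lf : ℝ} {Lg : ι → ℝ} (hf : LipschitzInCont Iz Lf f)
    (hg : ∀ i, LipschitzInCont Iz (Lg i) (g i)) {w : ι → ℝ} (hw : ∀ i, 0 ≤ w i)
    (hs : ∀ i ∈ Iz, s i = 0) :
    ∃ r ∈ clarkeGrad n Iz f x + ∑ i, Icc 0 (w i) • clarkeGrad n Iz (g i) x,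
      clarkeDeriv n Iz f x s + ∑ i, w i * max 0 (clarkeDeriv n Iz (g i) x s) ≤ r ⬝ᵥ s := by
  obtain ⟨vf, hvf, hvfs⟩ := hf.exists_mem_clarkeGrad_dotProduct_eq (x := x) hs
  choose vg hvg hvgs using fun i => (hg i).exists_mem_clarkeGrad_dotProduct_eq (x := x) hs
  -- the maximizer of `β ↦ β * D gᵢ(s)` over `[0, wᵢ]`
  set β : ι → ℝ := fun i => if 0 ≤ clarkeDeriv n Iz (g i) x s then w i else 0
  refine ⟨vf + ∑ i, β i • vg i, Set.add_mem_add hvf (Set.finsetSum_mem_finsetSum _ _ _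
    fun i _ => Set.smul_mem_smul ?_ (hvg i)), ?_⟩
  · simp only [β]
    split_ifs <;> simp [hw i]
  · rw [add_dotProduct, sum_dotProduct, hvfs]
    refine add_le_add le_rfl (Finset.sum_le_sum fun i _ => le_of_eq ?_)
    rw [smul_dotProduct, hvgs, smul_eq_mul]
    simp only [β]
    split_ifs with hD
    · rw [max_eq_right hD]
    · rw [max_eq_left (not_le.1 hD).le, mul_zero, zero_mul]

end ClarkeGradient

theorem dotDual_dotDual_Dc_subset (n : ℕ) (Iz : Finset (Fin n)) (l u x : Fin n → ℝ) :
    dotDual (dotDual (Dc n Iz l u x)) ⊆ Dc n Iz l u x := by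
  intro c hc
  have hsingle : ∀ i (a : ℝ), (∀ s ∈ Dc n Iz l u x, 0 ≤ a * s i) → 0 ≤ c i * a :=
    fun i a ha => by
      simpa [dotProduct_single] using
        hc (Pi.single i a) fun s hs => by simpa [single_dotProduct] using ha s hs
  refine ⟨fun i hi => ?_, fun i hi hxi => ?_, fun i hi hxi => ?_⟩
  · have h₁ := hsingle i 1 fun s hs => by simp [hs.1 i hi]
    have h₂ := hsingle i (-1) fun s hs => by simp [hs.1 i hi]
    linarith
  · simpa using hsingle i 1 fun s hs => by simpa using hs.2.1 i hi hxi
  · have := hsingle i (-1) fun s hs => by simpa using hs.2.2 i hi hxi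
    linarith

theorem feasible_clarke_stationary_implies_KKT_general
    (n m : ℕ) (Iz : Finset (Fin n)) (l u : Fin n → ℝ)
    (f : (Fin n → ℝ) → ℝ) (g : Fin m → (Fin n → ℝ) → ℝ) (Lf : ℝ) (Lg : Fin m → ℝ)
    (hf : ∀ x y : Fin n → ℝ, (∀ i ∈ Iz, x i = y i) →
      |f x - f y| ≤ Lf * Real.sqrt (∑ i, (x i - y i) ^ 2))
    (hg : ∀ i, ∀ x y : Fin n → ℝ, (∀ j ∈ Iz, x j = y j) →
      |g i x - g i y| ≤ Lg i * Real.sqrt (∑ j, (x j - y j) ^ 2))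
    (ε : ℝ) (hε : 0 < ε)
    (xbar : Fin n → ℝ)
    (hxbarF : ∀ i, g i xbar ≤ 0)
    -- Clarke stationarity of `P(·;ε)` at `xbar`:
    (hstatc : ∀ s ∈ Dc n Iz l u xbar,
      ∃ ξ ∈ clarkeGrad n Iz (fun x => f x + (1 / ε) * ∑ i, max 0 (g i x)) xbar,
        0 ≤ ∑ j, ξ j * s j)
    (hstatz : ∀ x ∈ Bz n Iz l u xbar,
      f xbar + (1 / ε) * ∑ i, max 0 (g i xbar) ≤ f x + (1 / ε) * ∑ i, max 0 (g i x)) :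
    ∃ lam : Fin m → ℝ,
      (∀ i, 0 ≤ lam i) ∧ (∑ i, lam i * g i xbar) = 0 ∧
      (∀ s ∈ Dc n Iz l u xbar,
        ∃ ξf ∈ clarkeGrad n Iz f xbar,
        ∃ ξg : Fin m → (Fin n → ℝ),
          (∀ i, ξg i ∈ clarkeGrad n Iz (g i) xbar) ∧
          0 ≤ ∑ j, (ξf j + ∑ i, lam i * ξg i j) * s j) ∧
      (∀ x ∈ Bz n Iz l u xbar, (∀ i, g i x ≤ 0) → f xbar ≤ f x) := by
  have hf' : LipschitzInCont Iz Lf f := hf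
  have hg' : ∀ i, LipschitzInCont Iz (Lg i) (g i) := hg
  set w : Fin m → ℝ := fun i => if g i xbar = 0 then 1 / ε else 0
  have hw : ∀ i, 0 ≤ w i := fun i => by simp only [w]; split_ifs <;> positivity
  set K := clarkeGrad n Iz f xbar + ∑ i, Icc 0 (w i) • clarkeGrad n Iz (g i) xbar
  have hKconv : Convex ℝ K :=
    convex_clarkeGrad.add (convex_sum _ fun i _ => convex_clarkeGrad.Icc_zero_smul _)
  have hK : ∀ s ∈ Dc n Iz l u xbar, ∃ r ∈ K, 0 ≤ r ⬝ᵥ s := fun s hs => by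
    obtain ⟨ξ, hξ, hξs⟩ := hstatc s hs
    obtain ⟨r, hr, hrs⟩ := exists_mem_add_sum_smul_clarkeGrad_le hf' hg' hw hs.1
    exact ⟨r, hr, hξs.trans <| (dotProduct_le_clarkeDeriv hξ hs.1).trans <|
      (hf'.clarkeDeriv_penalty_le hg' (by positivity) hxbarF hs.1).trans hrs⟩
  obtain ⟨ξ, hξK, hξ⟩ := exists_mem_dotDual_of_forall_exists hKconv
    (hf'.isCompact_add_sum_smul_clarkeGrad hg' w) (dotDual_dotDual_Dc_subset n Iz l u xbar) hK
  obtain ⟨ξf, hξf, _, hsum, rfl⟩ := hξK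
  obtain ⟨r, hr, rfl⟩ := (Set.mem_fintype_sum _ _).1 hsum
  choose lam hlam ξg hξg hr using hr
  have hsum0 : ∀ z, (∀ i, g i z ≤ 0) → ∑ i, max 0 (g i z) = 0 := fun z hz =>
    Finset.sum_eq_zero fun i _ => max_eq_left (hz i)
  refine ⟨lam, fun i => (hlam i).1, Finset.sum_eq_zero fun i _ => ?_,
    fun s hs => ⟨ξf, hξf, ξg, hξg, ?_⟩, fun y hy hgy => ?_⟩
  · by_cases hi : g i xbar = 0
    · simp [hi]
    · have : lam i = 0 := by simpa [w, hi] using hlam i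
      simp [this]
  · simpa [← hr, dotProduct, Finset.sum_apply] using hξ s hs
  · simpa [hsum0 xbar hxbarF, hsum0 y hgy] using hstatz y hy

/-- for any `ε > 0`, a feasible Clarke stationary point of the penalized
problem is a KKT stationary point of the original constrained problem. -/
theorem feasible_clarke_stationary_implies_KKT
    (n m : ℕ) (Iz : Finset (Fin n)) (l u : Fin n → ℝ) (hlu : ∀ i, l i < u i)
    (f : (Fin n → ℝ) → ℝ) (g : Fin m → (Fin n → ℝ) → ℝ) (Lf : ℝ) (Lg : Fin m → ℝ)
    (hf : ∀ x y : Fin n → ℝ, (∀ i ∈ Iz, x i = y i) →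
      |f x - f y| ≤ Lf * Real.sqrt (∑ i, (x i - y i) ^ 2))
    (hg : ∀ i, ∀ x y : Fin n → ℝ, (∀ j ∈ Iz, x j = y j) →
      |g i x - g i y| ≤ Lg i * Real.sqrt (∑ j, (x j - y j) ^ 2))
    (ε : ℝ) (hε : 0 < ε)
    (xbar : Fin n → ℝ) (hxbarS : xbar ∈ box n l u ∩ latt n Iz)
    (hxbarF : ∀ i, g i xbar ≤ 0)
    -- Clarke stationarity of `P(·;ε)` at `xbar`:
    (hstatc : ∀ s ∈ Dc n Iz l u xbar,
      ∃ ξ ∈ clarkeGrad n Iz (fun x => f x + (1 / ε) * ∑ i, max 0 (g i x)) xbar,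
        0 ≤ ∑ j, ξ j * s j)
    (hstatz : ∀ x ∈ Bz n Iz l u xbar,
      f xbar + (1 / ε) * ∑ i, max 0 (g i xbar) ≤ f x + (1 / ε) * ∑ i, max 0 (g i x)) :
    ∃ lam : Fin m → ℝ,
      (∀ i, 0 ≤ lam i) ∧ (∑ i, lam i * g i xbar) = 0 ∧
      (∀ s ∈ Dc n Iz l u xbar,
        ∃ ξf ∈ clarkeGrad n Iz f xbar,
        ∃ ξg : Fin m → (Fin n → ℝ),
          (∀ i, ξg i ∈ clarkeGrad n Iz (g i) xbar) ∧
          0 ≤ ∑ j, (ξf j + ∑ i, lam i * ξg i j) * s j) ∧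
      (∀ x ∈ Bz n Iz l u xbar, (∀ i, g i x ≤ 0) → f xbar ≤ f x) :=
  feasible_clarke_stationary_implies_KKT_general n m Iz l u f g Lf Lg hf hg ε hε xbar hxbarF hstatc
    hstatz
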